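/- For every integer μ ≥ 1 and every real p₁ with 2^{−μ} ≤ p₁ < 1/(2^μ − 1), there exist an integer n ≥ 2 and a source p on {1,…,n} with p(1) = p₁ such that R*_opt(p) = μ + lg p₁. (Thus the lower bound λ + lg p(1) of the tight-bound theorem is achieved throughout the range [2^{−λ}, 1/(2^λ − 1)).) -/

import Mathlib

/-- A source: a positive, monotonically nonincreasing probability mass function on `Fin n`. -/
def IsSource (n : ℕ) (p : Fin n → ℝ) : Prop :=
  (∀ i, 0 < p i) ∧ (∑ i, p i = 1) ∧ (∀ i j : Fin n, i ≤ j → p j ≤ p i)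

/-- A codeword-length vector: positive integer lengths satisfying the Kraft inequality. -/
def IsCLV (n : ℕ) (l : Fin n → ℤ) : Prop :=
  (∀ i, 1 ≤ l i) ∧ (∑ i, (2:ℝ) ^ (-(l i)) ≤ 1)

/-- Maximum pointwise redundancy `R*(l,p) = max_i (l(i) + lg p(i))`. -/
noncomputable def Rstar (n : ℕ) (l : Fin n → ℤ) (p : Fin n → ℝ) : ℝ :=
  ⨆ i : Fin n, ((l i : ℝ) + Real.logb 2 (p i))

/-- Minimum maximum pointwise redundancy over all codeword-length vectors. -/
noncomputable def RstarOpt (n : ℕ) (p : Fin n → ℝ) : ℝ :=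
  sInf {r : ℝ | ∃ l : Fin n → ℤ, IsCLV n l ∧ Rstar n l p = r}

/-
Take `2^μ - 1` symbols of probability `p₁` and one last symbol carrying the remaining mass
`1 - (2^μ - 1) p₁`, which lies in `(0, p₁]` exactly when `2^{-μ} ≤ p₁ < 1/(2^μ - 1)`.
The constant code of length `μ` satisfies Kraft and has redundancy `μ + lg p₁`. Conversely, if
every one of the first `2^μ - 1` symbols had length at most `μ - 1`, their Kraft terms alone would
sum to `(2^μ - 1) 2^{1-μ} ≥ 1`, leaving no room for the last symbol; so some symbol of
probability `p₁` has length at least `μ`.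
-/

open Finset

lemma le_Rstar {n : ℕ} (l : Fin n → ℤ) (p : Fin n → ℝ) (i : Fin n) :
    (l i : ℝ) + Real.logb 2 (p i) ≤ Rstar n l p :=
  le_ciSup (f := fun i => (l i : ℝ) + Real.logb 2 (p i)) (Set.finite_range _).bddAbove i

lemma Rstar_const {n : ℕ} (k : ℤ) {p : Fin n → ℝ} (hp : ∀ i, 0 < p i) {i₀ : Fin n}
    (hmax : ∀ i, p i ≤ p i₀) :
    Rstar n (fun _ => k) p = k + Real.logb 2 (p i₀) := by
  have : Nonempty (Fin n) := ⟨i₀⟩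
  refine le_antisymm (ciSup_le fun i => ?_) (le_Rstar (fun _ => k) p i₀)
  exact add_le_add_right (Real.logb_le_logb_of_le one_lt_two (hp i) (hmax i)) _

lemma isCLV_const {n k : ℕ} (hk : 1 ≤ k) (hn : n ≤ 2 ^ k) : IsCLV n (fun _ => (k : ℤ)) := by
  refine ⟨fun _ => (Nat.one_le_cast.mpr hk : (1 : ℤ) ≤ k), ?_⟩
  rw [sum_const, card_univ, Fintype.card_fin, nsmul_eq_mul, zpow_neg, zpow_natCast,
    ← div_eq_mul_inv, div_le_one (by positivity)]
  exact_mod_cast hn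

lemma isSource_snoc_const {m : ℕ} {a : ℝ} (hpos : 0 < 1 - m * a) (hle : 1 - m * a ≤ a) :
    IsSource (m + 1) (Fin.snoc (fun _ => a) (1 - m * a)) := by
  refine ⟨fun i => ?_, ?_, fun i j hij => ?_⟩
  · cases i using Fin.lastCases <;> simp [hpos, hpos.trans_le hle]
  · simp [Fin.sum_univ_castSucc]
  · cases j using Fin.lastCases with
    | last => cases i using Fin.lastCases <;> simp [hle]
    | cast j =>
      cases i using Fin.lastCases with
      | last => exact absurd hij (by simp)
      | cast i => simp

lemma exists_castSucc_length_ge {m k : ℕ} (hm : 2 ^ k ≤ 2 * m) {l : Fin (m + 1) → ℤ}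
    (hl : ∑ i, (2 : ℝ) ^ (-l i) ≤ 1) : ∃ i : Fin m, (k : ℤ) ≤ l i.castSucc := by
  by_contra! hshort
  have hterm : ∀ i : Fin m, (2 : ℝ) ^ (1 - (k : ℤ)) ≤ 2 ^ (-l i.castSucc) := fun i =>
    zpow_le_zpow_right₀ one_le_two (by linarith [hshort i])
  have hfirst : 1 ≤ ∑ i : Fin m, (2 : ℝ) ^ (-l i.castSucc) := by
    calc (1 : ℝ) ≤ m * 2 ^ (1 - (k : ℤ)) := by
          rw [zpow_sub₀ two_ne_zero, zpow_one, zpow_natCast, mul_div_assoc', le_div_iff₀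
            (by positivity), one_mul, mul_comm]
          exact_mod_cast hm
      _ = ∑ _i : Fin m, (2 : ℝ) ^ (1 - (k : ℤ)) := by simp
      _ ≤ _ := sum_le_sum fun i _ => hterm i
  have hlast : 0 < (2 : ℝ) ^ (-l (Fin.last m)) := zpow_pos two_pos _
  rw [Fin.sum_univ_castSucc] at hl
  linarith

lemma le_Rstar_snoc_const {m k : ℕ} (hm : 2 ^ k ≤ 2 * m) (a c : ℝ) {l : Fin (m + 1) → ℤ}
    (hl : IsCLV (m + 1) l) :
    k + Real.logb 2 a ≤ Rstar (m + 1) l (Fin.snoc (fun _ => a) c) := by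
  obtain ⟨i, hi⟩ := exists_castSucc_length_ge hm hl.2
  have hR := le_Rstar l (Fin.snoc (fun _ => a) c) i.castSucc
  rw [Fin.snoc_castSucc] at hR
  have hk : (k : ℝ) ≤ l i.castSucc := by exact_mod_cast hi
  linarith

theorem stmt14 (μ : ℕ) (hμ : 1 ≤ μ) (p₁ : ℝ)
    (h1 : (2:ℝ) ^ (-(μ:ℤ)) ≤ p₁) (h2 : p₁ < 1 / ((2:ℝ) ^ μ - 1)) :
    ∃ (n : ℕ) (hn : 2 ≤ n) (p : Fin n → ℝ), IsSource n p ∧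
      p ⟨0, by omega⟩ = p₁ ∧ RstarOpt n p = (μ:ℝ) + Real.logb 2 p₁ := by
  set m := 2 ^ μ - 1
  have h2μ : 2 ≤ 2 ^ μ := le_self_pow₀ one_le_two (by omega)
  have hm : m + 1 = 2 ^ μ := by omega
  have hmR : (m : ℝ) = 2 ^ μ - 1 := by rw [eq_sub_iff_add_eq]; exact_mod_cast hm
  have hpos : 0 < 1 - m * p₁ := by
    rw [hmR, sub_pos, ← lt_div_iff₀' (by rw [← hmR]; exact_mod_cast (by omega : 0 < m))]
    simpa using h2
  have hle : 1 - m * p₁ ≤ p₁ := by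
    rw [zpow_neg, zpow_natCast, inv_le_iff_one_le_mul₀' (by positivity)] at h1
    rw [hmR]
    linarith
  set p : Fin (m + 1) → ℝ := Fin.snoc (fun _ => p₁) (1 - m * p₁)
  have hsrc : IsSource (m + 1) p := isSource_snoc_const hpos hle
  have hp0 : p 0 = p₁ := by simp [p, Fin.snoc, show 0 < m by omega]
  refine ⟨m + 1, by omega, p, hsrc, hp0, IsLeast.csInf_eq ⟨⟨_, isCLV_const hμ hm.le, ?_⟩, ?_⟩⟩
  · rw [Rstar_const _ hsrc.1 (fun i => hsrc.2.2 0 i (Fin.zero_le i)), hp0]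
    push_cast; rfl
  · rintro _ ⟨l, hl, rfl⟩
    exact le_Rstar_snoc_const (by omega) p₁ _ hl
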